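/- Let p be an odd prime, a an integer with 1 ≤ a ≤ (p-1)/2, and r ≥ 1 an integer with 2p - 2a > 2r(2a - 1). Then ∑_{k=0}^{p-1} (2a - 2p)_k ((2a)_k)^{2r} / (k!)^{2r+1} = -∑_{k=0}^{p-2a} (2a-2p)_{p+k} ((2a)_{p+k})^{2r} / ((p+k)!)^{2r+1} as rational numbers. -/

import Mathlib

/-!
`(-n)_k / k! = (-1)^k C(n, k)`, and `(m + 1)_k / k! = (k + 1)_m / m!` is a polynomial of degree `m`
in `k`. Hence `∑_{k ≤ n} (-n)_k ((m + 1)_k)^s / (k!)^(s + 1)` is, up to sign, the `n`-th forward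
difference at `0` of a polynomial of degree `m s`, which vanishes when `m s < n`
(a case of the Karlsson–Minton formula). With `n = 2p - 2a`, `m = 2a - 1`, `s = 2r`, splitting
this vanishing sum at `k = p` gives the theorem.
-/

open Polynomial Finset
open scoped Nat

theorem sum_neg_one_pow_mul_choose_mul_eval_eq_zero {R : Type*} [CommRing R] {P : R[X]} {n : ℕ}
    (hP : P.natDegree < n) :
    ∑ k ∈ range (n + 1), (-1) ^ k * n.choose k * P.eval (k : R) = 0 := by
  have h := congrFun (fwdDiff_iter_eq_zero_of_degree_lt hP) 0
  rw [fwdDiff_iter_eq_sum_shift] at h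
  calc ∑ k ∈ range (n + 1), (-1) ^ k * n.choose k * P.eval (k : R)
      = (-1) ^ n * ∑ k ∈ range (n + 1), ((-1 : ℤ) ^ (n - k) * n.choose k) • P.eval (0 + k • 1) := by
        rw [mul_sum]
        refine sum_congr rfl fun k hk => ?_
        obtain ⟨j, rfl⟩ := Nat.exists_eq_add_of_le (mem_range_succ_iff.mp hk)
        have hsign : (-1 : R) ^ k = (-1) ^ (k + j) * (-1) ^ j := by
          rw [pow_add, mul_assoc, ← pow_add, Even.neg_one_pow ⟨j, rfl⟩, mul_one]
        simp only [zsmul_eq_mul, nsmul_eq_mul, zero_add, mul_one, add_tsub_cancel_left, hsign]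
        push_cast
        ring
    _ = 0 := by rw [h, Pi.zero_apply, mul_zero]

theorem ascPochhammer_eval_succ_mul_factorial {S : Type*} [CommSemiring S] (m k : ℕ) :
    (ascPochhammer S k).eval ((m : S) + 1) * m ! = (ascPochhammer S m).eval ((k : S) + 1) * k ! := by
  have hm := congrArg (eval 1) (ascPochhammer_mul S m k)
  have hk := congrArg (eval 1) (ascPochhammer_mul S k m)
  simp only [eval_mul, eval_comp, eval_add, eval_X, eval_natCast, ascPochhammer_eval_one] at hm hk
  rw [add_comm m k, ← hk, add_comm (1 : S), add_comm (1 : S)] at hm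
  rw [mul_comm, hm, mul_comm]

variable {K : Type*} [Field K] [CharZero K]

theorem ascPochhammer_eval_neg_natCast_div_factorial (n k : ℕ) :
    (ascPochhammer K k).eval (-n : K) / k ! = (-1) ^ k * n.choose k := by
  rw [ascPochhammer_eval_neg_eq_descPochhammer, descPochhammer_eval_eq_descFactorial,
    Nat.descFactorial_eq_factorial_mul_choose]
  push_cast
  rw [mul_div_assoc, mul_div_cancel_left₀ _ (Nat.cast_ne_zero.mpr (Nat.factorial_ne_zero k))]

theorem sum_ascPochhammer_neg_mul_pow_div_factorial_pow_eq_zero {n m s : ℕ} (h : m * s < n) :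
    ∑ k ∈ range (n + 1), (ascPochhammer K k).eval (-n : K) *
      ((ascPochhammer K k).eval ((m : K) + 1)) ^ s / (k ! : K) ^ (s + 1) = 0 := by
  set Q : K[X] := (C (m ! : K)⁻¹ * (ascPochhammer K m).comp (X + 1)) ^ s
  have hQ : Q.natDegree < n := by
    calc Q.natDegree ≤ s * (C (m ! : K)⁻¹ * (ascPochhammer K m).comp (X + 1)).natDegree :=
          natDegree_pow_le
      _ ≤ s * m := by
          gcongr
          refine (natDegree_C_mul_le _ _).trans ?_
          rw [natDegree_comp, ascPochhammer_natDegree, ← C_1, natDegree_X_add_C, mul_one]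
      _ < n := by rwa [mul_comm]
  rw [← sum_neg_one_pow_mul_choose_mul_eval_eq_zero hQ]
  refine sum_congr rfl fun k _ => ?_
  have hk : (k ! : K) ≠ 0 := Nat.cast_ne_zero.mpr (Nat.factorial_ne_zero k)
  have hm : (m ! : K) ≠ 0 := Nat.cast_ne_zero.mpr (Nat.factorial_ne_zero m)
  have hquot : (ascPochhammer K k).eval ((m : K) + 1) / k ! =
      (m ! : K)⁻¹ * (ascPochhammer K m).eval ((k : K) + 1) := by
    rw [div_eq_iff hk, inv_mul_eq_div, div_mul_eq_mul_div, eq_div_iff hm,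
      ascPochhammer_eval_succ_mul_factorial]
  calc _ = (ascPochhammer K k).eval (-n : K) / k ! *
        ((ascPochhammer K k).eval ((m : K) + 1) / k !) ^ s := by ring
    _ = _ := by
      rw [ascPochhammer_eval_neg_natCast_div_factorial, hquot]
      simp [Q]

theorem truncation_equals_neg_tail_general (p : ℕ)
    (a : ℕ) (ha1 : 1 ≤ a) (ha2 : 2 * a ≤ p - 1) (r : ℕ)
    (hbig : 2 * r * (2 * a - 1) < 2 * p - 2 * a) :
    ∑ k ∈ Finset.range p,
        (ascPochhammer ℚ k).eval (2 * a - 2 * p : ℚ)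
          * ((ascPochhammer ℚ k).eval (2 * a : ℚ)) ^ (2 * r)
          / (k.factorial : ℚ) ^ (2 * r + 1)
      = -∑ k ∈ Finset.range (p - 2 * a + 1),
          (ascPochhammer ℚ (p + k)).eval (2 * a - 2 * p : ℚ)
            * ((ascPochhammer ℚ (p + k)).eval (2 * a : ℚ)) ^ (2 * r)
            / ((p + k).factorial : ℚ) ^ (2 * r + 1) := by
  have hsum := sum_ascPochhammer_neg_mul_pow_div_factorial_pow_eq_zero (K := ℚ)
    (n := 2 * p - 2 * a) (m := 2 * a - 1) (s := 2 * r) (by rwa [mul_comm])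
  have hn : -((2 * p - 2 * a : ℕ) : ℚ) = 2 * a - 2 * p := by
    push_cast [Nat.cast_sub (by omega : 2 * a ≤ 2 * p)]
    ring
  have hm : ((2 * a - 1 : ℕ) : ℚ) + 1 = 2 * a := by
    push_cast [Nat.cast_sub (by omega : 1 ≤ 2 * a)]
    ring
  rw [hn, hm, show 2 * p - 2 * a + 1 = p + (p - 2 * a + 1) by omega, sum_range_add] at hsum
  exact eq_neg_of_add_eq_zero_left hsum

theorem truncation_equals_neg_tail (p : ℕ) [Fact p.Prime] (hp : Odd p)
    (a : ℕ) (ha1 : 1 ≤ a) (ha2 : 2 * a ≤ p - 1) (r : ℕ) (hr : 1 ≤ r)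
    (hbig : 2 * r * (2 * a - 1) < 2 * p - 2 * a) :
    ∑ k ∈ Finset.range p,
        (ascPochhammer ℚ k).eval (2 * a - 2 * p : ℚ)
          * ((ascPochhammer ℚ k).eval (2 * a : ℚ)) ^ (2 * r)
          / (k.factorial : ℚ) ^ (2 * r + 1)
      = -∑ k ∈ Finset.range (p - 2 * a + 1),
          (ascPochhammer ℚ (p + k)).eval (2 * a - 2 * p : ℚ)
            * ((ascPochhammer ℚ (p + k)).eval (2 * a : ℚ)) ^ (2 * r)
            / ((p + k).factorial : ℚ) ^ (2 * r + 1) :=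
  truncation_equals_neg_tail_general p a ha1 ha2 r hbig
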